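/- There exists a universal constant c > 0 such that for every γ ∈ (0,1] and every q ∈ (0,1/2) with L := ⌊1/q^γ⌋ ≥ 2, the East model on Λ = {1,…,L} satisfies q·c/C(𝟙0,B) ≤ T_hit(L) ≤ q/C(𝟙0,B), where B = {σ ∈ Ω_Λ : σ_L = 1} and C(𝟙0,B) is the capacity between 𝟙0 and B. -/

import Mathlib

open Filter Topology MeasureTheory

namespace East

/-- Configurations of the East model on `Λ = {1,…,L}`: `true` = particle (1),
`false` = vacancy (0).  The index `x : Fin L` corresponds to the site `x.val + 1`. -/
abbrev Cfg (L : ℕ) := Fin L → Bool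

noncomputable section

/-- Weight of a configuration under the product Bernoulli(1−q) measure π. -/
def weight (L : ℕ) (q : ℝ) (σ : Cfg L) : ℝ :=
  ∏ x : Fin L, (if σ x then (1 - q) else q)

/-- Mean of `f` under π. -/
def mean (L : ℕ) (q : ℝ) (f : Cfg L → ℝ) : ℝ :=
  ∑ σ : Cfg L, weight L q σ * f σ

/-- π-measure of a set of configurations. -/
def measSet (L : ℕ) (q : ℝ) (A : Set (Cfg L)) : ℝ :=
  ∑ σ : Cfg L, Set.indicator A (weight L q) σ

/-- The East constraint at `x`, as a 0/1 real number: the leftmost site is unconstrained,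
and any other site is free iff its left neighbour is a vacancy. -/
def cR (L : ℕ) (σ : Cfg L) (x : Fin L) : ℝ :=
  if x.val = 0 then 1
  else if σ ⟨x.val - 1, lt_of_le_of_lt (Nat.sub_le _ _) x.isLt⟩ = false then 1 else 0

/-- The East constraint at `x`, as a proposition. -/
def constraintP (L : ℕ) (σ : Cfg L) (x : Fin L) : Prop :=
  x.val = 0 ∨ σ ⟨x.val - 1, lt_of_le_of_lt (Nat.sub_le _ _) x.isLt⟩ = false

/-- Flip the spin at `x`. -/
def flip (L : ℕ) (σ : Cfg L) (x : Fin L) : Cfg L :=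
  Function.update σ x (!(σ x))

/-- Local mean `π_x f`. -/
def locMean (L : ℕ) (q : ℝ) (f : Cfg L → ℝ) (σ : Cfg L) (x : Fin L) : ℝ :=
  (1 - q) * f (Function.update σ x true) + q * f (Function.update σ x false)

/-- The East generator `𝓛 f (σ) = Σ_x c_x(σ) (π_x f (σ) − f σ)`. -/
def gen (L : ℕ) (q : ℝ) (f : Cfg L → ℝ) (σ : Cfg L) : ℝ :=
  ∑ x : Fin L, cR L σ x * (locMean L q f σ x - f σ)

/-- Dirichlet form `𝓓(f) = π(f ⬝ (−𝓛f))`. -/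
def dirichlet (L : ℕ) (q : ℝ) (f : Cfg L → ℝ) : ℝ :=
  mean L q (fun σ => f σ * (-(gen L q f σ)))

/-- Variance under π. -/
def variance (L : ℕ) (q : ℝ) (f : Cfg L → ℝ) : ℝ :=
  mean L q (fun σ => f σ ^ 2) - (mean L q f) ^ 2

/-- Spectral gap: `inf {𝓓(f)/Var(f) : f non-constant}`. -/
def gap (L : ℕ) (q : ℝ) : ℝ :=
  sInf {r : ℝ | ∃ f : Cfg L → ℝ, (¬ ∀ σ τ : Cfg L, f σ = f τ) ∧
    r = dirichlet L q f / variance L q f}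

/-- Relaxation time `T_rel(L) = 1 / gap(L)`. -/
def Trel (L : ℕ) (q : ℝ) : ℝ := 1 / gap L q

/-- Jump rate of the move at `x` from `σ`: the constraint times `q` (killing a particle
costs `q`… i.e. a particle flips to a vacancy at rate `q`) or `p = 1−q`. -/
def rate (L : ℕ) (q : ℝ) (σ : Cfg L) (x : Fin L) : ℝ :=
  cR L σ x * (if σ x then q else (1 - q))

/-- The East Markov rate matrix `K`, with off-diagonal entries
`K(σ,σ^x) = c_x(σ)(q·σ_x + p(1−σ_x))` and zero row sums. -/
def K (L : ℕ) (q : ℝ) : Matrix (Cfg L) (Cfg L) ℝ := fun σ η =>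
  (∑ x : Fin L, if η = flip L σ x then rate L q σ x else 0)
    - (if η = σ then ∑ x : Fin L, rate L q σ x else 0)

/-- Time-`t` law of the East process started from `η`, evaluated on a set `E`:
`P_t(η,E) = Σ_{σ∈E} exp(tK)(η,σ)`. -/
def law (L : ℕ) (q t : ℝ) (η : Cfg L) (E : Set (Cfg L)) : ℝ :=
  ∑ σ : Cfg L, Set.indicator E (fun σ' => NormedSpace.exp (t • K L q) η σ') σ

/-- Total variation distance of the time-`t` law started at `η` from π. -/
def tvDist (L : ℕ) (q t : ℝ) (η : Cfg L) : ℝ :=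
  (1 / 2) * ∑ σ : Cfg L, |NormedSpace.exp (t • K L q) η σ - weight L q σ|

/-- Mixing time `T_mix(L) = inf {t ≥ 0 : max_η ‖P_t(η,·) − π‖_TV ≤ 1/4}`. -/
def Tmix (L : ℕ) (q : ℝ) : ℝ :=
  sInf {t : ℝ | 0 ≤ t ∧ ∀ η : Cfg L, tvDist L q t η ≤ 1 / 4}

/-- The sub-rate matrix of `K` indexed by the complement of the target set `B`. -/
def Ksub (L : ℕ) (q : ℝ) (B : Set (Cfg L)) :
    Matrix {σ : Cfg L // σ ∉ B} {σ : Cfg L // σ ∉ B} ℝ :=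
  fun a b => K L q a.1 b.1

/-- Survival function of the hitting time of `B` started from `η`:
`P_η(τ_B > t) = Σ_{σ∉B} exp(t K_{Bᶜ})(η,σ)`  (equal to `0` when `η ∈ B`). -/
def surv (L : ℕ) (q : ℝ) (B : Set (Cfg L)) (η : Cfg L) (t : ℝ) : ℝ :=
  letI : Fintype {σ : Cfg L // σ ∉ B} := Fintype.ofFinite _
  ∑ a : {σ : Cfg L // σ ∉ B}, ∑ b : {σ : Cfg L // σ ∉ B},
    (if a.1 = η then NormedSpace.exp (t • Ksub L q B) a b else 0)

/-- Expected hitting time `E_η[τ_B] = ∫₀^∞ P_η(τ_B > t) dt`. -/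
def expHit (L : ℕ) (q : ℝ) (B : Set (Cfg L)) (η : Cfg L) : ℝ :=
  ∫ t in Set.Ioi (0 : ℝ), surv L q B η t

/-- The set `{σ : σ_L = 1}` (particle at the last site). -/
def lastOneSet (L : ℕ) : Set (Cfg L) :=
  {σ | ∀ x : Fin L, x.val + 1 = L → σ x = true}

/-- The set `{σ : σ_L = 0}` (vacancy at the last site). -/
def lastZeroSet (L : ℕ) : Set (Cfg L) :=
  {σ | ∀ x : Fin L, x.val + 1 = L → σ x = false}

/-- The configuration `𝟙0`: a single vacancy at the last site `L`. -/
def oneZero (L : ℕ) : Cfg L := fun x => decide (x.val + 1 ≠ L)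

/-- The all-ones configuration `𝟙`. -/
def allOnes (L : ℕ) : Cfg L := fun _ => true

/-- Mean hitting time `T_hit(L) = E_{𝟙0}[τ_{η_L = 1}]`. -/
def Thit (L : ℕ) (q : ℝ) : ℝ := expHit L q (lastOneSet L) (oneZero L)

/-- `f ≍ h` : `0 < liminf_{q↓0} f(q)/h(q) ≤ limsup_{q↓0} f(q)/h(q) < ∞`
(liminf/limsup taken in `[0,∞]`). -/
def Asymp (f h : ℝ → ℝ) : Prop :=
  0 < Filter.liminf (fun q => ENNReal.ofReal (f q / h q)) (𝓝[>] (0 : ℝ)) ∧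
  Filter.limsup (fun q => ENNReal.ofReal (f q / h q)) (𝓝[>] (0 : ℝ)) < ⊤

/-- `f ≻ h` : there is `β > 0` with `liminf_{q↓0} q^β · f(q)/h(q) > 0`. -/
def SuccSep (f h : ℝ → ℝ) : Prop :=
  ∃ β : ℝ, 0 < β ∧
    0 < Filter.liminf (fun q => ENNReal.ofReal (q ^ β * (f q / h q))) (𝓝[>] (0 : ℝ))

/-- Number of vacancies (zeros) in a configuration. -/
def zeros (L : ℕ) (σ : Cfg L) : ℕ :=
  (Finset.univ.filter (fun x : Fin L => σ x = false)).card

/-- One legal East move, with both endpoint configurations having at most `m` vacancies. -/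
def stepZ (L m : ℕ) (σ σ' : Cfg L) : Prop :=
  (∃ x : Fin L, constraintP L σ x ∧ σ' = flip L σ x) ∧ zeros L σ ≤ m ∧ zeros L σ' ≤ m

/-- Configuration extended to sites `0,1,…`: site `0` carries the frozen vacancy. -/
def extCfg (L : ℕ) (η : Cfg L) : ℕ → Bool :=
  fun i => if h : 1 ≤ i ∧ i ≤ L then η ⟨i - 1, by omega⟩ else false

/-- The gap at site `x`: distance to the nearest vacancy strictly to the left
(including the frozen vacancy at the origin). -/
def gapAt (L : ℕ) (η : Cfg L) (x : ℕ) : ℕ :=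
  sInf {d : ℕ | 0 < d ∧ extCfg L η (x - d) = false}

/-- `φ_{d,x}`: remove the vacancy at site `x` if it is present with gap exactly `d`. -/
def phi (L : ℕ) (d x : ℕ) (η : Cfg L) : Cfg L :=
  fun i => if i.val + 1 = x ∧ η i = false ∧ gapAt L η (i.val + 1) = d then true else η i

/-- The deterministic dynamics: step `k+1` applies `φ_{α_{k+1}}`, where
`α_{k+1} = (k / L + 1, L − k % L)` enumerates `{1,…,L}²` in the order `≺`
(gap sizes increasing; for a fixed gap size, sites from right to left). -/
def detDyn (L : ℕ) (η : Cfg L) : ℕ → Cfg L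
  | 0 => η
  | k + 1 => phi L (k / L + 1) (L - k % L) (detDyn L η k)

/-- The set `A_*` of configurations driven to `𝟙0` by the deterministic dynamics. -/
def Astar (L : ℕ) : Set (Cfg L) :=
  {η | detDyn L η (L ^ 2) = oneZero L}

/-- The internal boundary `∂A_*` of `A_*`. -/
def boundaryAstar (L : ℕ) : Set (Cfg L) :=
  {σ | σ ∈ Astar L ∧ ∃ x : Fin L, constraintP L σ x ∧ flip L σ x ∉ Astar L}

/-- Capacity between `a` and `B`, via the Dirichlet principle:
`C(a,B) = inf {𝓓(f) : f(a) = 1, f ≡ 0 on B}`. -/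
def capacity (L : ℕ) (q : ℝ) (a : Cfg L) (B : Set (Cfg L)) : ℝ :=
  sInf {r : ℝ | ∃ f : Cfg L → ℝ, f a = 1 ∧ (∀ σ ∈ B, f σ = 0) ∧ r = dirichlet L q f}

end

end East

/-!
Let `h` be the equilibrium potential of `(a, B)` (`h a = 1`, `h = 0` on `B`, `𝓛h = 0`
elsewhere) and let `U` solve `𝓛U = -1` off `B`, `U = 0` on `B`. A function with zero Dirichlet
form is constant (East moves connect every configuration to the all-vacant one), so the killed
generator `K_{Bᶜ}` is negative definite in `L²(π)`: the semigroup `exp (t K_{Bᶜ})` decays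
exponentially and integrating `d/dt exp (t K_{Bᶜ}) U = -exp (t K_{Bᶜ}) 1` gives
`E_a[τ_B] = U a`. The Dirichlet principle gives `C(a, B) = 𝓓(h)`, and the symmetry of the
Dirichlet form gives `π(h) = 𝓔(h, U) = 𝓔(U, h) = U a · 𝓓(h)`, so `E_a[τ_B] = π(h) / C(a, B)`.
Truncating `h` to `[0, 1]` does not increase `𝓓`, hence `0 ≤ h ≤ 1` and
`π(a) ≤ π(h) ≤ π(Bᶜ)`. For `a = 𝟙0` and `B = {σ_L = 1}` these bounds are `q (1 - q)^(L - 1)`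
and `q`, and `(1 - q)^(L - 1) ≥ e^(-2qL) ≥ 1/8` since `qL ≤ 1`.
-/

open Matrix

theorem exists_pos_mul_norm_sq_le {E : Type*} [NormedAddCommGroup E] [NormedSpace ℝ E]
    [FiniteDimensional ℝ E] [Nontrivial E] {Q : E → ℝ} (hQ : Continuous Q)
    (hsmul : ∀ (c : ℝ) v, Q (c • v) = c ^ 2 * Q v) (hpos : ∀ v ≠ 0, 0 < Q v) :
    ∃ c, 0 < c ∧ ∀ v, c * ‖v‖ ^ 2 ≤ Q v := by
  obtain ⟨u, hu, hmin⟩ := (isCompact_sphere (0 : E) 1).exists_isMinOn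
    (NormedSpace.sphere_nonempty.2 zero_le_one) hQ.continuousOn
  refine ⟨Q u, hpos u (ne_zero_of_mem_unit_sphere ⟨u, hu⟩), fun v => ?_⟩
  rcases eq_or_ne v 0 with rfl | hv
  · simpa using (hsmul 0 0).ge
  · have hv' : 0 < ‖v‖ := norm_pos_iff.2 hv
    have hmem : ‖v‖⁻¹ • v ∈ Metric.sphere (0 : E) 1 := by
      simp [norm_smul, hv'.ne']
    calc Q u * ‖v‖ ^ 2 ≤ Q (‖v‖⁻¹ • v) * ‖v‖ ^ 2 := by gcongr; exact hmin hmem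
      _ = Q v := by rw [hsmul]; field_simp

namespace Matrix

variable {ι : Type*} [Fintype ι]

section Exp

variable [DecidableEq ι]

theorem hasDerivAt_exp_smul_mulVec (M : Matrix ι ι ℝ) (v : ι → ℝ) (t : ℝ) :
    HasDerivAt (fun s : ℝ => NormedSpace.exp (s • M) *ᵥ v)
      (M *ᵥ (NormedSpace.exp (t • M) *ᵥ v)) t := by
  -- any normed algebra structure on matrices will do: the statement does not see the norm
  let _ := Matrix.linftyOpNormedRing (n := ι) (α := ℝ)
  let _ := Matrix.linftyOpNormedAlgebra (n := ι) (R := ℝ) (α := ℝ)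
  let A : Matrix ι ι ℝ →L[ℝ] ι → ℝ := LinearMap.toContinuousLinearMap
    { toFun := fun A => A *ᵥ v, map_add' := fun A B => add_mulVec A B v,
      map_smul' := fun c A => smul_mulVec c A v }
  rw [mulVec_mulVec]
  exact A.hasFDerivAt.comp_hasDerivAt t (hasDerivAt_exp_smul_const' M t)

theorem mulVec_exp_smul_mulVec (M : Matrix ι ι ℝ) (v : ι → ℝ) (t : ℝ) :
    M *ᵥ (NormedSpace.exp (t • M) *ᵥ v) = NormedSpace.exp (t • M) *ᵥ (M *ᵥ v) := by
  rw [mulVec_mulVec, mulVec_mulVec, ((Commute.refl M).smul_right t).exp_right.eq]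

end Exp

variable {w : ι → ℝ} {M : Matrix ι ι ℝ}

theorem mulVec_surjective_of_dotProduct_neg [DecidableEq ι]
    (hM : ∀ v ≠ 0, (w * v) ⬝ᵥ (M *ᵥ v) < 0) : Function.Surjective M.mulVec := by
  refine mulVec_surjective_iff_isUnit.2 (mulVec_injective_iff_isUnit.1 fun u v huv => ?_)
  by_contra hne
  have := hM (u - v) (sub_ne_zero.2 hne)
  rw [mulVec_sub, huv, sub_self, dotProduct_zero] at this
  exact lt_irrefl 0 this

theorem exists_pos_mul_dotProduct_le [Nonempty ι] (hM : ∀ v ≠ 0, (w * v) ⬝ᵥ (M *ᵥ v) < 0) :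
    ∃ c, 0 < c ∧ ∀ v, c * ((w * v) ⬝ᵥ v) ≤ -((w * v) ⬝ᵥ (M *ᵥ v)) := by
  obtain ⟨c, hc, hcQ⟩ := exists_pos_mul_norm_sq_le (Q := fun v => -((w * v) ⬝ᵥ (M *ᵥ v)))
    (by fun_prop) (fun c v => by
      simp only [mul_smul_comm, mulVec_smul, smul_dotProduct, dotProduct_smul, smul_eq_mul]
      ring) (fun v hv => neg_pos.2 (hM v hv))
  set W := ∑ i, |w i| + 1
  have hW : 0 < W := by positivity
  refine ⟨c / W, by positivity, fun v => le_trans ?_ (hcQ v)⟩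
  have hN : (w * v) ⬝ᵥ v ≤ W * ‖v‖ ^ 2 := by
    calc (w * v) ⬝ᵥ v ≤ ∑ i, |w i| * ‖v‖ ^ 2 := by
          refine Finset.sum_le_sum fun i _ => ?_
          have : v i ^ 2 ≤ ‖v‖ ^ 2 := by
            simpa only [Real.norm_eq_abs, sq_abs] using
              pow_le_pow_left₀ (norm_nonneg _) (norm_le_pi_norm v i) 2
          simp only [Pi.mul_apply]
          nlinarith [le_abs_self (w i), abs_nonneg (w i), sq_nonneg (v i)]
      _ ≤ W * ‖v‖ ^ 2 := by rw [← Finset.sum_mul]; gcongr; linarith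
  calc c / W * ((w * v) ⬝ᵥ v) ≤ c / W * (W * ‖v‖ ^ 2) := by gcongr
    _ = c * ‖v‖ ^ 2 := by field_simp

variable [DecidableEq ι]

theorem exists_dotProduct_exp_smul_mulVec_le [Nonempty ι]
    (hM : ∀ v ≠ 0, (w * v) ⬝ᵥ (M *ᵥ v) < 0) :
    ∃ c, 0 < c ∧ ∀ v t, 0 ≤ t →
      (w * (NormedSpace.exp (t • M) *ᵥ v)) ⬝ᵥ (NormedSpace.exp (t • M) *ᵥ v) ≤
        (w * v) ⬝ᵥ v * Real.exp (-(2 * c) * t) := by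
  obtain ⟨c, hc, hgap⟩ := exists_pos_mul_dotProduct_le hM
  refine ⟨c, hc, fun v t ht => ?_⟩
  set x := fun s : ℝ => NormedSpace.exp (s • M) *ᵥ v
  have hx := fun s => hasDerivAt_exp_smul_mulVec M v s
  have hy : ∀ s, HasDerivAt (fun s => (w * x s) ⬝ᵥ x s) (2 * ((w * x s) ⬝ᵥ (M *ᵥ x s))) s := by
    intro s
    have hxi := fun i => hasDerivAt_pi.1 (hx s) i
    refine (HasDerivAt.fun_sum (u := Finset.univ) fun i _ =>
      ((hxi i).const_mul (w i)).fun_mul (hxi i)).congr_deriv ?_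
    simp only [dotProduct, Pi.mul_apply, Finset.mul_sum, x]
    exact Finset.sum_congr rfl fun i _ => by ring
  have := le_gronwallBound_of_liminf_deriv_right_le (f := fun s => (w * x s) ⬝ᵥ x s)
    (K := -(2 * c)) (ε := 0) (δ := (w * v) ⬝ᵥ v) (a := 0) (b := t)
    (fun s _ => (hy s).continuousAt.continuousWithinAt)
    (fun s _ r hr => (hy s).hasDerivWithinAt.liminf_right_slope_le hr)
    (by simp [x]) (fun s _ => by linarith [hgap (x s)]) t ⟨ht, le_rfl⟩
  rwa [gronwallBound_ε0, sub_zero] at this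

theorem exists_abs_exp_smul_mulVec_apply_le (hw : ∀ i, 0 < w i)
    (hM : ∀ v ≠ 0, (w * v) ⬝ᵥ (M *ᵥ v) < 0) (v : ι → ℝ) (i : ι) :
    ∃ C c, 0 < c ∧ ∀ t, 0 ≤ t → |(NormedSpace.exp (t • M) *ᵥ v) i| ≤ C * Real.exp (-c * t) := by
  have : Nonempty ι := ⟨i⟩
  obtain ⟨c, hc, hdecay⟩ := exists_dotProduct_exp_smul_mulVec_le hM
  refine ⟨√((w * v) ⬝ᵥ v / w i), c, hc, fun t ht => ?_⟩
  set x := NormedSpace.exp (t • M) *ᵥ v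
  have hxi : w i * x i ^ 2 ≤ (w * x) ⬝ᵥ x := by
    simpa only [sq, mul_assoc, dotProduct, Pi.mul_apply] using
      Finset.single_le_sum (f := fun j => w j * (x j * x j))
        (fun j _ => mul_nonneg (hw j).le (mul_self_nonneg _)) (Finset.mem_univ i)
  have hexp : Real.exp (-(2 * c) * t) = Real.exp (-c * t) ^ 2 := by
    rw [sq, ← Real.exp_add]; ring_nf
  calc |x i| = √(x i ^ 2) := (Real.sqrt_sq_eq_abs _).symm
    _ ≤ √((w * v) ⬝ᵥ v / w i * Real.exp (-c * t) ^ 2) := by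
        gcongr
        rw [div_mul_eq_mul_div, le_div_iff₀ (hw i), ← hexp, mul_comm]
        exact hxi.trans (hdecay v t ht)
    _ = √((w * v) ⬝ᵥ v / w i) * Real.exp (-c * t) := by
        rw [Real.sqrt_mul' _ (sq_nonneg _), Real.sqrt_sq (Real.exp_pos _).le]

theorem integral_exp_smul_mulVec_apply (hw : ∀ i, 0 < w i)
    (hM : ∀ v ≠ 0, (w * v) ⬝ᵥ (M *ᵥ v) < 0) {u r : ι → ℝ} (hu : M *ᵥ u = -r) (i : ι) :
    ∫ t in Set.Ioi (0 : ℝ), (NormedSpace.exp (t • M) *ᵥ r) i = u i := by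
  have hderiv : ∀ t : ℝ, HasDerivAt (fun s : ℝ => (NormedSpace.exp (s • M) *ᵥ u) i)
      (-(NormedSpace.exp (t • M) *ᵥ r) i) t := by
    intro t
    have := hasDerivAt_pi.1 (hasDerivAt_exp_smul_mulVec M u t) i
    rwa [mulVec_exp_smul_mulVec, hu, mulVec_neg] at this
  obtain ⟨Cr, cr, hcr, hr⟩ := exists_abs_exp_smul_mulVec_apply_le hw hM r i
  obtain ⟨Cu, cu, hcu, hu'⟩ := exists_abs_exp_smul_mulVec_apply_le hw hM u i
  have hint : IntegrableOn (fun t : ℝ => -(NormedSpace.exp (t • M) *ᵥ r) i) (Set.Ioi 0) := by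
    have hcont : Continuous fun t : ℝ => NormedSpace.exp (t • M) *ᵥ r :=
      continuous_iff_continuousAt.2 fun t => (hasDerivAt_exp_smul_mulVec M r t).continuousAt
    refine Integrable.mono' ((exp_neg_integrableOn_Ioi 0 hcr).const_mul Cr)
      ((continuous_apply i).comp hcont).neg.aestronglyMeasurable ?_
    filter_upwards [ae_restrict_mem measurableSet_Ioi] with t ht
    simpa only [norm_neg, Real.norm_eq_abs] using hr t (le_of_lt ht)
  have hlim : Tendsto (fun t : ℝ => (NormedSpace.exp (t • M) *ᵥ u) i) atTop (𝓝 0) := by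
    refine squeeze_zero_norm' ?_ (by simpa using (Real.tendsto_exp_atBot.comp
      (tendsto_id.const_mul_atTop_of_neg (neg_lt_zero.2 hcu))).const_mul Cu)
    filter_upwards [eventually_ge_atTop 0] with t ht
    simpa only [Real.norm_eq_abs, neg_mul] using hu' t ht
  have := integral_Ioi_of_hasDerivAt_of_tendsto' (fun t _ => hderiv t) hint hlim
  rw [integral_neg] at this
  simpa [one_smul] using this

end Matrix

namespace East

variable {L : ℕ} {q : ℝ}

theorem flip_flip (σ : Cfg L) (x : Fin L) : flip L (flip L σ x) x = σ := by
  simp [flip]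

theorem flip_involutive (x : Fin L) : Function.Involutive (flip L · x) :=
  fun σ => flip_flip σ x

theorem cR_flip (σ : Cfg L) (x : Fin L) : cR L (flip L σ x) x = cR L σ x := by
  by_cases hx : x.val = 0
  · simp [cR, hx]
  · have hne : (⟨x.val - 1, by omega⟩ : Fin L) ≠ x := Fin.ne_of_val_ne (by simp; omega)
    simp only [cR, hx, if_false, East.flip, Function.update_of_ne hne]

theorem weight_pos (hq0 : 0 < q) (hq1 : q < 1) (σ : Cfg L) : 0 < weight L q σ :=
  Finset.prod_pos fun x _ => by split <;> linarith

theorem weight_flip_mul_rate (σ : Cfg L) (x : Fin L) :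
    weight L q (flip L σ x) * rate L q (flip L σ x) x = weight L q σ * rate L q σ x := by
  have hrest : ∏ y ∈ {x}ᶜ, (if flip L σ x y then 1 - q else q) =
      ∏ y ∈ {x}ᶜ, (if σ y then 1 - q else q) :=
    Finset.prod_congr rfl fun y hy => by
      rw [East.flip, Function.update_of_ne (by simpa using hy)]
  simp only [weight, rate, cR_flip, Fintype.prod_eq_mul_prod_compl x, hrest]
  cases h : σ x <;> simp [East.flip, h] <;> ring

theorem gen_eq_sum_rate (f : Cfg L → ℝ) (σ : Cfg L) :
    gen L q f σ = ∑ x, rate L q σ x * (f (flip L σ x) - f σ) := by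
  refine Finset.sum_congr rfl fun x _ => ?_
  have hself : ∀ b, σ x = b → Function.update σ x b = σ := fun b hb => by
    rw [← hb, Function.update_eq_self]
  cases h : σ x <;> simp [rate, locMean, East.flip, h, hself _ h] <;> ring

theorem K_mulVec (f : Cfg L → ℝ) : K L q *ᵥ f = gen L q f := by
  funext σ
  simp only [mulVec, dotProduct, K, sub_mul, Finset.sum_mul, ite_mul, zero_mul,
    Finset.sum_sub_distrib]
  rw [Finset.sum_comm]
  simp [gen_eq_sum_rate, mul_sub]

theorem gen_add (f g : Cfg L → ℝ) : gen L q (f + g) = gen L q f + gen L q g := by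
  simp only [← K_mulVec, mulVec_add]

theorem sum_sum_flip (F : Cfg L → Fin L → ℝ) :
    ∑ σ, ∑ x, F (flip L σ x) x = ∑ σ, ∑ x, F σ x := by
  rw [Finset.sum_comm, Finset.sum_comm (f := F)]
  exact Finset.sum_congr rfl fun x _ => (flip_involutive x).bijective.sum_comp (F · x)

noncomputable def dirichletForm (L : ℕ) (q : ℝ) (f g : Cfg L → ℝ) : ℝ :=
  mean L q (fun σ => f σ * -gen L q g σ)

theorem dirichletForm_self (f : Cfg L → ℝ) : dirichletForm L q f f = dirichlet L q f := rfl

theorem dirichletForm_eq_sum (f g : Cfg L → ℝ) :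
    dirichletForm L q f g = (1 / 2) * ∑ σ, ∑ x, weight L q σ * rate L q σ x *
      ((f (flip L σ x) - f σ) * (g (flip L σ x) - g σ)) := by
  set T := fun σ x => weight L q σ * rate L q σ x * (f σ * (g σ - g (flip L σ x)))
  have hT : dirichletForm L q f g = ∑ σ, ∑ x, T σ x := by
    simp only [dirichletForm, mean, gen_eq_sum_rate, Finset.mul_sum, ← Finset.sum_neg_distrib]
    exact Finset.sum_congr rfl fun σ _ => Finset.sum_congr rfl fun x _ => by ring
  have hT_flip : ∑ σ, ∑ x, T σ x =
      ∑ σ, ∑ x, weight L q σ * rate L q σ x * (f (flip L σ x) * (g (flip L σ x) - g σ)) := by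
    rw [← sum_sum_flip]
    simp only [T, weight_flip_mul_rate, flip_flip]
  have hsplit : ∑ σ, ∑ x, weight L q σ * rate L q σ x *
      ((f (flip L σ x) - f σ) * (g (flip L σ x) - g σ)) = ∑ σ, ∑ x, T σ x +
      ∑ σ, ∑ x, weight L q σ * rate L q σ x * (f (flip L σ x) * (g (flip L σ x) - g σ)) := by
    simp only [T, ← Finset.sum_add_distrib]
    exact Finset.sum_congr rfl fun σ _ => Finset.sum_congr rfl fun x _ => by ring
  linarith

theorem dirichletForm_comm (f g : Cfg L → ℝ) :
    dirichletForm L q f g = dirichletForm L q g f := by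
  simp only [dirichletForm_eq_sum, mul_comm (f _ - f _)]

theorem dirichlet_eq_sum (f : Cfg L → ℝ) :
    dirichlet L q f = (1 / 2) * ∑ σ, ∑ x, weight L q σ * rate L q σ x *
      (f (flip L σ x) - f σ) ^ 2 := by
  simp only [← dirichletForm_self, dirichletForm_eq_sum, sq]

theorem dirichlet_add (f g : Cfg L → ℝ) :
    dirichlet L q (f + g) = dirichlet L q f + 2 * dirichletForm L q f g + dirichlet L q g := by
  simp only [dirichlet_eq_sum, dirichletForm_eq_sum, Finset.mul_sum, ← Finset.sum_add_distrib]
  exact Finset.sum_congr rfl fun σ _ => Finset.sum_congr rfl fun x _ => by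
    simp only [Pi.add_apply]
    ring

theorem rate_nonneg (hq0 : 0 < q) (hq1 : q < 1) (σ : Cfg L) (x : Fin L) : 0 ≤ rate L q σ x := by
  unfold rate cR
  split_ifs <;> linarith

theorem rate_pos (hq0 : 0 < q) (hq1 : q < 1) {σ : Cfg L} {x : Fin L} (hx : cR L σ x = 1) :
    0 < rate L q σ x := by
  unfold rate
  rw [hx, one_mul]
  split_ifs <;> linarith

theorem dirichlet_comp_le (hq0 : 0 < q) (hq1 : q < 1) {φ : ℝ → ℝ}
    (hφ : ∀ a b, |φ a - φ b| ≤ |a - b|) (f : Cfg L → ℝ) :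
    dirichlet L q (φ ∘ f) ≤ dirichlet L q f := by
  simp only [dirichlet_eq_sum]
  gcongr _ * ∑ σ, ∑ x, ?_ with σ _ x _
  exact mul_le_mul_of_nonneg_left (sq_le_sq.2 (hφ _ _))
    (mul_nonneg (weight_pos hq0 hq1 σ).le (rate_nonneg hq0 hq1 σ x))

theorem dirichlet_nonneg (hq0 : 0 < q) (hq1 : q < 1) (f : Cfg L → ℝ) : 0 ≤ dirichlet L q f := by
  rw [dirichlet_eq_sum]
  exact mul_nonneg (by norm_num) (Finset.sum_nonneg fun σ _ => Finset.sum_nonneg fun x _ =>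
    mul_nonneg (mul_nonneg (weight_pos hq0 hq1 σ).le (rate_nonneg hq0 hq1 σ x)) (sq_nonneg _))

theorem flip_eq_of_dirichlet_eq_zero (hq0 : 0 < q) (hq1 : q < 1) {f : Cfg L → ℝ}
    (hf : dirichlet L q f = 0) {σ : Cfg L} {x : Fin L} (hx : cR L σ x = 1) :
    f (flip L σ x) = f σ := by
  rw [dirichlet_eq_sum] at hf
  have hterm := fun (τ : Cfg L) y => mul_nonneg (mul_nonneg (weight_pos hq0 hq1 τ).le
    (rate_nonneg hq0 hq1 τ y)) (sq_nonneg (f (flip L τ y) - f τ))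
  have h := (Finset.sum_eq_zero_iff_of_nonneg fun y _ => hterm σ y).1
    ((Finset.sum_eq_zero_iff_of_nonneg fun τ _ => Finset.sum_nonneg fun y _ => hterm τ y).1
      (by linarith) σ (Finset.mem_univ _)) x (Finset.mem_univ _)
  have hwr := mul_pos (weight_pos hq0 hq1 σ) (rate_pos hq0 hq1 hx)
  have := pow_eq_zero_iff two_ne_zero |>.1 ((mul_eq_zero.1 h).resolve_left hwr.ne')
  linarith

theorem eq_of_flip_invariant {f : Cfg L → ℝ}
    (hf : ∀ σ x, cR L σ x = 1 → f (flip L σ x) = f σ) (σ τ : Cfg L) : f σ = f τ := by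
  -- a site all of whose left neighbours are vacant is unconstrained, so sites can be emptied
  -- one at a time from the left
  suffices h : ∀ m (σ : Cfg L), (∀ i : Fin L, i.val + m < L → σ i = false) →
      f σ = f fun _ => false by
    rw [h L σ fun i hi => by omega, h L τ fun i hi => by omega]
  intro m
  induction m with
  | zero =>
    intro σ hσ
    congr 1
    funext i
    exact hσ i i.isLt
  | succ m ih =>
    intro σ hσ
    by_cases hm : m < L
    · set k : Fin L := ⟨L - 1 - m, by omega⟩
      have hk : f σ = f (Function.update σ k false) := by
        by_cases hσk : σ k = false
        · rw [← hσk, Function.update_eq_self]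
        · have hcR : cR L σ k = 1 := by
            unfold cR
            split_ifs with h0 h1
            · rfl
            · rfl
            · exact absurd (hσ _ (by simp [k] at h0 ⊢; omega)) h1
          rw [← hf σ k hcR, East.flip, Bool.eq_true_of_not_eq_false hσk]
          rfl
      rw [hk]
      refine ih _ fun i hi => ?_
      by_cases hik : i = k
      · rw [hik, Function.update_self]
      · rw [Function.update_of_ne hik]
        exact hσ i (by have : i.val ≠ L - 1 - m := fun h => hik (Fin.ext h); omega)
    · exact ih σ fun i hi => by omega

theorem eq_of_dirichlet_eq_zero (hq0 : 0 < q) (hq1 : q < 1) {f : Cfg L → ℝ}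
    (hf : dirichlet L q f = 0) (σ τ : Cfg L) : f σ = f τ :=
  eq_of_flip_invariant (fun _ _ => flip_eq_of_dirichlet_eq_zero hq0 hq1 hf) σ τ

section Killed

variable {B : Set (Cfg L)}

theorem exists_extend_by_zero (v : {σ : Cfg L // σ ∉ B} → ℝ) :
    ∃ U : Cfg L → ℝ, (∀ σ ∈ B, U σ = 0) ∧ U ∘ Subtype.val = v :=
  ⟨Function.extend Subtype.val v 0,
    fun _ hσ => Function.extend_apply' _ _ _ fun ⟨a, ha⟩ => a.2 (ha ▸ hσ),
    funext <| Subtype.val_injective.extend_apply v 0⟩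

variable [Fintype {σ : Cfg L // σ ∉ B}]

theorem sum_subtype_notMem (F : Cfg L → ℝ) (hF : ∀ σ ∈ B, F σ = 0) :
    ∑ a : {σ // σ ∉ B}, F a = ∑ σ, F σ := by
  classical
  rw [← Finset.sum_subtype (Finset.univ.filter (· ∉ B)) (by simp),
    Finset.sum_filter_of_ne (p := fun σ => σ ∉ B) fun σ _ h hσ => h (hF σ hσ)]

theorem Ksub_mulVec {U : Cfg L → ℝ} (hU : ∀ σ ∈ B, U σ = 0) (a : {σ // σ ∉ B}) :
    (Ksub L q B *ᵥ (U ∘ Subtype.val)) a = gen L q U a := by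
  rw [← K_mulVec]
  exact sum_subtype_notMem (fun σ => K L q a σ * U σ) fun σ hσ => by rw [hU σ hσ, mul_zero]

theorem weight_mul_dotProduct_Ksub_mulVec {U : Cfg L → ℝ} (hU : ∀ σ ∈ B, U σ = 0) :
    (weight L q ∘ Subtype.val * U ∘ Subtype.val) ⬝ᵥ (Ksub L q B *ᵥ (U ∘ Subtype.val)) =
      -dirichlet L q U := by
  simp only [dotProduct, Pi.mul_apply, Function.comp_apply, Ksub_mulVec hU]
  rw [sum_subtype_notMem (fun σ => weight L q σ * U σ * gen L q U σ)
    fun σ hσ => by rw [hU σ hσ, mul_zero, zero_mul]]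
  simp only [dirichlet, mean, ← Finset.sum_neg_distrib]
  exact Finset.sum_congr rfl fun σ _ => by ring

theorem weight_mul_dotProduct_Ksub_mulVec_neg (hq0 : 0 < q) (hq1 : q < 1) (hB : B.Nonempty)
    (v : {σ : Cfg L // σ ∉ B} → ℝ) (hv : v ≠ 0) :
    (weight L q ∘ Subtype.val * v) ⬝ᵥ (Ksub L q B *ᵥ v) < 0 := by
  obtain ⟨U, hU0, rfl⟩ := exists_extend_by_zero v
  rw [weight_mul_dotProduct_Ksub_mulVec hU0, neg_lt_zero]
  refine (dirichlet_nonneg hq0 hq1 U).lt_of_ne fun h => hv (funext fun a => ?_)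
  obtain ⟨b, hb⟩ := hB
  rw [Function.comp_apply, eq_of_dirichlet_eq_zero hq0 hq1 h.symm a b, hU0 b hb, Pi.zero_apply]

end Killed

theorem exists_dirichletProblem_solution (hq0 : 0 < q) (hq1 : q < 1) {B : Set (Cfg L)}
    (hB : B.Nonempty) (g r : Cfg L → ℝ) :
    ∃ U : Cfg L → ℝ, (∀ σ ∈ B, U σ = g σ) ∧ ∀ σ ∉ B, gen L q U σ = r σ := by
  let _ := Fintype.ofFinite {σ : Cfg L // σ ∉ B}
  obtain ⟨v, hv⟩ := mulVec_surjective_of_dotProduct_neg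
    (weight_mul_dotProduct_Ksub_mulVec_neg hq0 hq1 hB) fun a => r a - gen L q g a
  obtain ⟨V, hV0, rfl⟩ := exists_extend_by_zero v
  refine ⟨g + V, fun σ hσ => by simp [hV0 σ hσ], fun σ hσ => ?_⟩
  have := congr_fun hv ⟨σ, hσ⟩
  rw [Ksub_mulVec hV0] at this
  rw [gen_add, Pi.add_apply, this]
  ring

theorem expHit_eq_of_gen_eq_neg_one (hq0 : 0 < q) (hq1 : q < 1) {B : Set (Cfg L)}
    (hB : B.Nonempty) {U : Cfg L → ℝ} (hU0 : ∀ σ ∈ B, U σ = 0)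
    (hU : ∀ σ ∉ B, gen L q U σ = -1) {η : Cfg L} (hη : η ∉ B) : expHit L q B η = U η := by
  -- the instance `surv` is defined with, so that `hsurv` holds syntactically
  let _ := Fintype.ofFinite {σ : Cfg L // σ ∉ B}
  have hsurv : ∀ t, surv L q B η t =
      (NormedSpace.exp (t • Ksub L q B) *ᵥ fun _ => 1) ⟨η, hη⟩ := by
    intro t
    simp only [surv, mulVec, dotProduct, mul_one]
    rw [Finset.sum_comm]
    refine Finset.sum_congr rfl fun b _ => ?_
    rw [Fintype.sum_eq_single ⟨η, hη⟩ fun a ha => if_neg fun h => ha (Subtype.ext h)]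
    exact if_pos rfl
  have hKU : Ksub L q B *ᵥ (U ∘ Subtype.val) = -fun _ => 1 :=
    funext fun a => by rw [Ksub_mulVec hU0, hU a a.2]; rfl
  simp only [expHit, hsurv]
  exact integral_exp_smul_mulVec_apply (w := weight L q ∘ Subtype.val)
    (fun a => weight_pos hq0 hq1 a.1) (weight_mul_dotProduct_Ksub_mulVec_neg hq0 hq1 hB) hKU _

theorem capacity_nonneg (hq0 : 0 < q) (hq1 : q < 1) (a : Cfg L) (B : Set (Cfg L)) :
    0 ≤ capacity L q a B :=
  Real.sInf_nonneg <| by rintro _ ⟨f, -, -, rfl⟩; exact dirichlet_nonneg hq0 hq1 f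

structure IsEquilibriumPotential (L : ℕ) (q : ℝ) (a : Cfg L) (B : Set (Cfg L))
    (h : Cfg L → ℝ) : Prop where
  apply_self : h a = 1
  eq_zero : ∀ σ ∈ B, h σ = 0
  gen_eq_zero : ∀ σ, σ ≠ a → σ ∉ B → gen L q h σ = 0

section EquilibriumPotential

variable {a : Cfg L} {B : Set (Cfg L)}

theorem exists_isEquilibriumPotential (hq0 : 0 < q) (hq1 : q < 1) (ha : a ∉ B) :
    ∃ h, IsEquilibriumPotential L q a B h := by
  classical
  obtain ⟨h, hbd, hharm⟩ := exists_dirichletProblem_solution hq0 hq1 (Set.insert_nonempty a B)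
    (fun σ => if σ = a then 1 else 0) 0
  refine ⟨h, by simpa using hbd a (Set.mem_insert a B), fun σ hσ => ?_, fun σ hσa hσB => ?_⟩
  · rw [hbd σ (Set.mem_insert_of_mem a hσ), if_neg (ne_of_mem_of_not_mem hσ ha)]
  · exact hharm σ (by simp [hσa, hσB])

variable {h : Cfg L → ℝ} (hh : IsEquilibriumPotential L q a B h)
include hh

theorem IsEquilibriumPotential.dirichletForm_eq {f : Cfg L → ℝ} (hf : ∀ σ ∈ B, f σ = 0) :
    dirichletForm L q f h = f a * dirichlet L q h := by
  have key : ∀ g : Cfg L → ℝ, (∀ σ ∈ B, g σ = 0) →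
      dirichletForm L q g h = weight L q a * (g a * -gen L q h a) := by
    intro g hg
    refine Finset.sum_eq_single a (fun σ _ hσa => ?_) (by simp)
    by_cases hσB : σ ∈ B
    · simp [hg σ hσB]
    · simp [hh.gen_eq_zero σ hσa hσB]
  rw [key f hf, ← dirichletForm_self, key h hh.eq_zero, hh.apply_self]
  ring

theorem IsEquilibriumPotential.dirichlet_eq_add {f : Cfg L → ℝ} (hfa : f a = 1)
    (hfB : ∀ σ ∈ B, f σ = 0) : dirichlet L q f = dirichlet L q h + dirichlet L q (f - h) := by
  have hd := hh.dirichletForm_eq (f := f - h) fun σ hσ => by simp [hfB σ hσ, hh.eq_zero σ hσ]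
  rw [Pi.sub_apply, hfa, hh.apply_self, sub_self, zero_mul] at hd
  conv_lhs => rw [← add_sub_cancel h f]
  rw [dirichlet_add, dirichletForm_comm, hd]
  ring

theorem IsEquilibriumPotential.capacity_eq (hq0 : 0 < q) (hq1 : q < 1) :
    capacity L q a B = dirichlet L q h := by
  refine IsLeast.csInf_eq ⟨⟨h, hh.apply_self, hh.eq_zero, rfl⟩, ?_⟩
  rintro _ ⟨f, hfa, hfB, rfl⟩
  rw [hh.dirichlet_eq_add hfa hfB]
  linarith [dirichlet_nonneg hq0 hq1 (f - h)]

theorem IsEquilibriumPotential.mem_Icc (hq0 : 0 < q) (hq1 : q < 1) (σ : Cfg L) :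
    h σ ∈ Set.Icc 0 1 := by
  -- the truncation of `h` to `[0, 1]` is admissible and has no larger Dirichlet form
  set φ : ℝ → ℝ := fun r => Set.projIcc 0 1 zero_le_one r
  have hφa : (φ ∘ h) a = 1 := by simp [φ, hh.apply_self]
  have hφB : ∀ σ ∈ B, (φ ∘ h) σ = 0 := fun σ hσ => by simp [φ, hh.eq_zero σ hσ]
  have hle := dirichlet_comp_le hq0 hq1 (fun x y => Set.abs_projIcc_sub_projIcc zero_le_one) h
  have h0 : dirichlet L q (φ ∘ h - h) = 0 := by
    have := hh.dirichlet_eq_add hφa hφB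
    linarith [dirichlet_nonneg hq0 hq1 (φ ∘ h - h)]
  have := eq_of_dirichlet_eq_zero hq0 hq1 h0 σ a
  simp only [Pi.sub_apply, hφa, hh.apply_self, sub_self, sub_eq_zero] at this
  rw [← this]
  exact (Set.projIcc 0 1 zero_le_one (h σ)).2

theorem IsEquilibriumPotential.expHit_mul_dirichlet (hq0 : 0 < q) (hq1 : q < 1) (ha : a ∉ B)
    (hB : B.Nonempty) : expHit L q B a * dirichlet L q h = mean L q h := by
  obtain ⟨U, hU0, hU⟩ := exists_dirichletProblem_solution hq0 hq1 hB 0 fun _ => -1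
  rw [expHit_eq_of_gen_eq_neg_one hq0 hq1 hB hU0 hU ha, ← hh.dirichletForm_eq hU0,
    dirichletForm_comm]
  refine Finset.sum_congr rfl fun σ _ => ?_
  by_cases hσ : σ ∈ B
  · simp [hh.eq_zero σ hσ]
  · simp [hU σ hσ]

end EquilibriumPotential

theorem expHit_mem_Icc (hq0 : 0 < q) (hq1 : q < 1) {a : Cfg L}
    {B : Set (Cfg L)} (ha : a ∉ B) (hB : B.Nonempty) :
    expHit L q B a ∈
      Set.Icc (weight L q a / capacity L q a B) (measSet L q Bᶜ / capacity L q a B) := by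
  obtain ⟨h, hh⟩ := exists_isEquilibriumPotential hq0 hq1 ha
  obtain ⟨b, hb⟩ := hB
  have hpos : 0 < dirichlet L q h := (dirichlet_nonneg hq0 hq1 h).lt_of_ne fun h0 => by
    simpa [hh.apply_self, hh.eq_zero b hb] using eq_of_dirichlet_eq_zero hq0 hq1 h0.symm a b
  have hE : expHit L q B a = mean L q h / dirichlet L q h := by
    rw [eq_div_iff hpos.ne', hh.expHit_mul_dirichlet hq0 hq1 ha ⟨b, hb⟩]
  have hw := fun σ => (weight_pos hq0 hq1 (L := L) σ).le
  rw [hh.capacity_eq hq0 hq1, hE]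
  refine ⟨?_, ?_⟩ <;> gcongr
  · simpa [mean, hh.apply_self] using Finset.single_le_sum (f := fun σ => weight L q σ * h σ)
      (fun σ _ => mul_nonneg (hw σ) (hh.mem_Icc hq0 hq1 σ).1) (Finset.mem_univ a)
  · refine Finset.sum_le_sum fun σ _ => ?_
    by_cases hσ : σ ∈ B
    · simp [hh.eq_zero σ hσ, hσ]
    · simpa [hσ] using mul_le_of_le_one_right (hw σ) (hh.mem_Icc hq0 hq1 σ).2

theorem mem_lastOneSet_iff {n : ℕ} (σ : Cfg (n + 1)) :
    σ ∈ lastOneSet (n + 1) ↔ σ (Fin.last n) = true := by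
  refine ⟨fun h => h _ (by simp), fun h x hx => ?_⟩
  rwa [show x = Fin.last n from Fin.ext (by simp; omega)]

theorem weight_oneZero {n : ℕ} : weight (n + 1) q (oneZero (n + 1)) = q * (1 - q) ^ n := by
  rw [weight, Fin.prod_univ_castSucc]
  simp [oneZero, Fin.val_last, mul_comm, (Fin.is_lt _).ne]

theorem measSet_compl_lastOneSet {n : ℕ} : measSet (n + 1) q (lastOneSet (n + 1))ᶜ = q := by
  set g : Fin (n + 1) → Bool → ℝ := fun x b =>
    if x = Fin.last n then (if b then 0 else q) else (if b then 1 - q else q)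
  have hind : ∀ σ : Cfg (n + 1),
      (lastOneSet (n + 1))ᶜ.indicator (weight (n + 1) q) σ = ∏ x, g x (σ x) := by
    intro σ
    cases h : σ (Fin.last n) <;>
      simp [Set.indicator, mem_lastOneSet_iff, h, weight, g, Fin.prod_univ_castSucc]
  rw [measSet, Finset.sum_congr rfl fun σ _ => hind σ, ← Fintype.prod_sum]
  simp [g]

theorem Thit_mem_Icc (hq0 : 0 < q) (hq1 : q < 1) (hL : 0 < L) :
    Thit L q ∈ Set.Icc (q * (1 - q) ^ (L - 1) / capacity L q (oneZero L) (lastOneSet L))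
      (q / capacity L q (oneZero L) (lastOneSet L)) := by
  obtain ⟨n, rfl⟩ := Nat.exists_eq_add_one_of_ne_zero hL.ne'
  have := expHit_mem_Icc hq0 hq1 (a := oneZero (n + 1)) (B := lastOneSet (n + 1))
    (by simp [mem_lastOneSet_iff, oneZero]) ⟨allOnes (n + 1), fun _ _ => rfl⟩
  rwa [weight_oneZero, measSet_compl_lastOneSet] at this

theorem one_div_eight_le_one_sub_pow {q : ℝ} (hq0 : 0 ≤ q) (hq : q ≤ 1 / 2) {n : ℕ}
    (hn : n * q ≤ 1) : 1 / 8 ≤ (1 - q) ^ n := by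
  have hexp : Real.exp (-(2 * q)) ≤ 1 - q := by
    rw [Real.exp_neg, inv_le_iff_one_le_mul₀' (Real.exp_pos _)]
    nlinarith [Real.add_one_le_exp (2 * q)]
  have he2 : Real.exp 2 ≤ 8 := by
    have : Real.exp 2 = Real.exp 1 ^ 2 := by rw [← Real.exp_nat_mul]; norm_num
    nlinarith [Real.exp_one_lt_d9, Real.exp_pos 1]
  calc 1 / 8 ≤ Real.exp (-2) := by
        rw [Real.exp_neg, one_div]; exact inv_anti₀ (Real.exp_pos 2) he2
    _ ≤ Real.exp (-(2 * q)) ^ n := by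
        rw [← Real.exp_nat_mul]; exact Real.exp_le_exp.2 (by nlinarith)
    _ ≤ (1 - q) ^ n := pow_le_pow_left₀ (Real.exp_pos _).le hexp n

theorem natFloor_one_div_rpow_mul_le {q γ : ℝ} (hq0 : 0 < q) (hq1 : q ≤ 1) (hγ : γ ≤ 1) :
    (⌊1 / q ^ γ⌋₊ : ℝ) * q ≤ 1 := by
  have hqγ : q ≤ q ^ γ := by simpa using Real.rpow_le_rpow_of_exponent_ge hq0 hq1 hγ
  calc (⌊1 / q ^ γ⌋₊ : ℝ) * q ≤ 1 / q ^ γ * q ^ γ := by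
        gcongr
        exact Nat.floor_le (by positivity)
    _ = 1 := by field_simp [(Real.rpow_pos_of_pos hq0 γ).ne']

/-- the hitting time is comparable to `q` over the capacity.
There is a universal `c > 0` such that for every `γ ∈ (0,1]` and every `q ∈ (0,1/2)` with
`L = ⌊1/q^γ⌋ ≥ 2`, the East model on `{1,…,L}` satisfies
`q·c/C(𝟙0,B) ≤ T_hit(L) ≤ q/C(𝟙0,B)` with `B = {σ : σ_L = 1}`. -/
theorem hitting_time_capacity_bounds :
    ∃ c : ℝ, 0 < c ∧
      ∀ γ : ℝ, 0 < γ → γ ≤ 1 → ∀ q : ℝ, 0 < q → q < 1 / 2 →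
        2 ≤ ⌊(1 : ℝ) / q ^ γ⌋₊ →
        q * c /
            capacity (⌊(1 : ℝ) / q ^ γ⌋₊) q (oneZero (⌊(1 : ℝ) / q ^ γ⌋₊))
              (lastOneSet (⌊(1 : ℝ) / q ^ γ⌋₊)) ≤
          Thit (⌊(1 : ℝ) / q ^ γ⌋₊) q ∧
        Thit (⌊(1 : ℝ) / q ^ γ⌋₊) q ≤
          q /
            capacity (⌊(1 : ℝ) / q ^ γ⌋₊) q (oneZero (⌊(1 : ℝ) / q ^ γ⌋₊))
              (lastOneSet (⌊(1 : ℝ) / q ^ γ⌋₊)) := by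
  refine ⟨1 / 8, by norm_num, fun γ _ hγ q hq0 hq hL => ?_⟩
  set L := ⌊(1 : ℝ) / q ^ γ⌋₊
  have hq1 : q < 1 := by linarith
  obtain ⟨hlow, hup⟩ := Thit_mem_Icc hq0 hq1 (by omega : 0 < L)
  have hLq : ((L - 1 : ℕ) : ℝ) * q ≤ 1 :=
    le_trans (by gcongr; exact Nat.sub_le L 1) (natFloor_one_div_rpow_mul_le hq0 hq1.le hγ)
  refine ⟨le_trans ?_ hlow, hup⟩
  gcongr
  · exact capacity_nonneg hq0 hq1 _ _
  · exact one_div_eight_le_one_sub_pow hq0.le hq.le hLq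

end East
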